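/- arXiv:1411.0293 — 5 statements merged into one kernel-verified Lean document; each statement's English description precedes it below -/
import Mathlib

section
/- For all natural numbers h and m, the Chebyshev polynomials of the second kind satisfy the product formula U_h · U_m = Σ_{k=0}^{min(h,m)} U_{h+m−2k} in the polynomial ring ℤ[X]. -/
/-!
Peel off the top term: `U_m U_k = U_{m+k} + U_{m-1} U_{k-1}`, since both sides satisfy the
three-term recurrence in `k` and agree at `k = 0, 1`. Applying this `k` times to `U_h U_k`
yields `U_{h+k} + U_{h+k-2} + ⋯ + U_{h-k}` plus the remainder `U_{h-k-1} U_{-1} = 0`.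
-/

open Polynomial Polynomial.Chebyshev Finset

namespace Polynomial.Chebyshev

variable (R : Type*) [CommRing R]

theorem U_mul_U (m k : ℤ) : U R m * U R k = U R (m + k) + U R (m - 1) * U R (k - 1) := by
  induction k using Polynomial.Chebyshev.induct with
  | zero => simp
  | one =>
    rw [sub_self, U_zero, U_one, mul_one]
    linear_combination -U_add_one R m
  | add_two k ih1 ih2 =>
    have h₁ := U_add_two R (m + k)
    have h₂ := U_add_two R k
    have h₃ := U_add_one R k
    linear_combination (norm := ring_nf)
      U R m * h₂ - h₁ + 2 * (X : R[X]) * ih1 - ih2 - U R (m - 1) * h₃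
  | neg_add_one k ih1 ih2 =>
    have h₁ := U_sub_one R (m - k)
    have h₂ := U_sub_one R (-k)
    have h₃ := U_sub_one R (-k - 1)
    linear_combination (norm := ring_nf)
      U R m * h₂ - h₁ + 2 * (X : R[X]) * ih1 - ih2 - U R (m - 1) * h₃

theorem U_mul_U_natCast_eq_sum (m : ℤ) (n : ℕ) :
    U R m * U R n = ∑ k ∈ range (n + 1), U R (m + n - 2 * k) := by
  induction n generalizing m with
  | zero => simp
  | succ n ih =>
    rw [sum_range_succ', U_mul_U]
    push_cast
    rw [add_sub_cancel_right, ih, add_comm]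
    congr 1
    · exact sum_congr rfl fun k _ => by ring_nf
    · ring_nf

end Polynomial.Chebyshev

/-- The product formula for Chebyshev polynomials of the second kind:
`U_h · U_m = Σ_{k=0}^{min(h,m)} U_{h+m−2k}` in `ℤ[X]`. -/
theorem chebyshev_U_mul (h m : ℕ) :
    U ℤ h * U ℤ m = ∑ k ∈ Finset.range (min h m + 1), U ℤ ((h : ℤ) + m - 2 * k) := by
  rcases le_total m h with hmh | hhm
  · rw [min_eq_right hmh, U_mul_U_natCast_eq_sum]
  · rw [min_eq_left hhm, mul_comm, U_mul_U_natCast_eq_sum, add_comm (m : ℤ)]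
end

section
/- Let d ≥ 1, K = ℤ^d × ℤ × {−1,1}, k = (l,j,a), with dist(k,k') = 1 if (l,j) = (l',j') and a ≠ a', and dist(k,k') = max(|l−l'|_∞, |j−j'|) otherwise. Let N ≥ 1, γ > 0, τ > 0, let d_• : K → ℂ and R : K × K → ℂ, and assume |d_k − d_{k'}| ≥ γ·max(1, |l−l'|_∞)^{−τ} for all k ≠ k' with dist(k,k') ≤ N. Define A_{k,k'} = R_{k,k'}/(d_k − d_{k'}) for 0 < dist(k,k') ≤ N and A_{k,k'} = 0 otherwise. Then for every s ≥ 0, |A|_s ≤ 2 γ^{−1} N^{τ} |R|_s. -/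
open scoped Classical ENNReal NNReal

/-- The set of signs `{−1, 1}`. -/
abbrev Sgn : Type := ({-1, 1} : Finset ℤ)

/-- The index set `K = ℤ^d × ℤ × {−1,1}`, with `i = (l,j) ∈ ℤ^{d+1}`. -/
abbrev KIdx (d : ℕ) : Type := ((Fin d → ℤ) × ℤ) × Sgn

noncomputable section

/-- `dist(k,k') = 1` if `(l,j) = (l',j')` and `a ≠ a'`, and
`dist(k,k') = max(|l−l'|_∞, |j−j'|)` otherwise. -/
def kdist {d : ℕ} (k k' : KIdx d) : ℕ :=
  if k.1 = k'.1 ∧ k.2 ≠ k'.2 then 1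
  else max (Finset.univ.sup fun p => (k.1.1 p - k'.1.1 p).natAbs) (k.1.2 - k'.1.2).natAbs

/-- The `ℓ²`-operator norm `‖·‖₀` of a `2×2` complex matrix indexed by `Sgn`. -/
def opNorm0 (m : Matrix Sgn Sgn ℂ) : ℝ≥0∞ :=
  ‖Matrix.toEuclideanCLM (𝕜 := ℂ) m‖₊

/-- The `2×2` block `M_{{i}}^{{i'}}`. -/
def blk {G : Type*} (M : G × Sgn → G × Sgn → ℂ) (i i' : G) : Matrix Sgn Sgn ℂ :=
  fun a a' => M (i, a) (i', a')

/-- `[M(i)] = sup_{h−h'=i} ‖M_{{h}}^{{h'}}‖₀`. -/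
def blockSup {G : Type*} [AddCommGroup G] (M : G × Sgn → G × Sgn → ℂ) (i : G) : ℝ≥0∞ :=
  ⨆ h : G, opNorm0 (blk M h (h - i))

/-- `⟨i⟩ = max(1, sz i)`. -/
def ang {G : Type*} (sz : G → ℕ) (i : G) : ℕ := max 1 (sz i)

/-- The `s`-decay norm `|M|_s ∈ [0,∞]`: `|M|_s² = Σ_i ⟨i⟩^{2s} [M(i)]²`. -/
def dnorm {G : Type*} [AddCommGroup G] (sz : G → ℕ) (s : ℝ)
    (M : G × Sgn → G × Sgn → ℂ) : ℝ≥0∞ :=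
  (∑' i : G, (ang sz i : ℝ≥0∞) ^ (2 * s) * blockSup M i ^ 2) ^ (1 / 2 : ℝ)

/-- `|i|_∞` on `ℤ^{d+1} = ℤ^d × ℤ`. -/
def szI (d : ℕ) (i : (Fin d → ℤ) × ℤ) : ℕ :=
  max (Finset.univ.sup fun p => (i.1 p).natAbs) i.2.natAbs

end

/-!
Inside the window `0 < dist(k,k') ≤ N` we have `|l − l'|_∞ ≤ dist(k,k') ≤ N`, so the small divisor
satisfies `|d_k − d_{k'}| ≥ γ N^{-τ}` and `A` is entrywise dominated by `γ⁻¹ N^τ |R|`; outside it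
`A` vanishes. For `2 × 2` blocks, every entry is bounded by the operator norm and the operator norm
by twice the largest entry, which is where the factor `2` comes from. The block bound passes to the
suprema `[M(i)]` and then to the weighted sum defining `|·|_s`.
-/

section MatrixNorm

variable {𝕜 n : Type*} [RCLike 𝕜] [Fintype n] [DecidableEq n]

lemma norm_entry_le_norm_toEuclideanCLM (m : Matrix n n 𝕜) (a b : n) :
    ‖m a b‖ ≤ ‖Matrix.toEuclideanCLM (𝕜 := 𝕜) m‖ := by
  have hcol : Matrix.toEuclideanCLM (𝕜 := 𝕜) m (EuclideanSpace.single b 1) a = m a b := by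
    simp [Matrix.ofLp_toEuclideanCLM, Matrix.mulVec_single]
  calc ‖m a b‖ ≤ ‖Matrix.toEuclideanCLM (𝕜 := 𝕜) m (EuclideanSpace.single b 1)‖ :=
        hcol ▸ PiLp.norm_apply_le _ a
    _ ≤ ‖Matrix.toEuclideanCLM (𝕜 := 𝕜) m‖ * ‖EuclideanSpace.single b (1 : 𝕜)‖ :=
        ContinuousLinearMap.le_opNorm _ _
    _ = ‖Matrix.toEuclideanCLM (𝕜 := 𝕜) m‖ := by simp

lemma norm_toEuclideanCLM_le_card_mul (m : Matrix n n 𝕜) {C : ℝ} (hC : 0 ≤ C)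
    (h : ∀ a b, ‖m a b‖ ≤ C) :
    ‖Matrix.toEuclideanCLM (𝕜 := 𝕜) m‖ ≤ Fintype.card n * C := by
  refine ContinuousLinearMap.opNorm_le_bound _ (by positivity) fun x => ?_
  set L := ∑ b, ‖x b‖
  have hL : L ^ 2 ≤ Fintype.card n * ‖x‖ ^ 2 := by
    rw [EuclideanSpace.norm_sq_eq]; exact sq_sum_le_card_mul_sum_sq
  have hrow : ∀ a, ‖Matrix.toEuclideanCLM (𝕜 := 𝕜) m x a‖ ≤ C * L := fun a => by
    rw [Matrix.ofLp_toEuclideanCLM, Matrix.mulVec, dotProduct, Finset.mul_sum]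
    refine (norm_sum_le _ _).trans (Finset.sum_le_sum fun b _ => ?_)
    rw [norm_mul]; exact mul_le_mul_of_nonneg_right (h a b) (norm_nonneg _)
  refine le_of_sq_le_sq ?_ (by positivity)
  calc ‖Matrix.toEuclideanCLM (𝕜 := 𝕜) m x‖ ^ 2
      = ∑ a, ‖Matrix.toEuclideanCLM (𝕜 := 𝕜) m x a‖ ^ 2 := EuclideanSpace.norm_sq_eq _
    _ ≤ ∑ _a : n, (C * L) ^ 2 :=
        Finset.sum_le_sum fun a _ => pow_le_pow_left₀ (norm_nonneg _) (hrow a) 2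
    _ = Fintype.card n * C ^ 2 * L ^ 2 := by simp [mul_pow]; ring
    _ ≤ Fintype.card n * C ^ 2 * (Fintype.card n * ‖x‖ ^ 2) := by gcongr
    _ = (Fintype.card n * C * ‖x‖) ^ 2 := by ring

end MatrixNorm

section DecayNorm

variable {G : Type*} {A R : G × Sgn → G × Sgn → ℂ}

lemma opNorm0_blk_le_of_norm_entry_le {C : ℝ} (hC : 0 ≤ C)
    (h : ∀ k k', ‖A k k'‖ ≤ C * ‖R k k'‖) (g g' : G) :
    opNorm0 (blk A g g') ≤ 2 * ENNReal.ofReal C * opNorm0 (blk R g g') := by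
  have hop : ‖Matrix.toEuclideanCLM (𝕜 := ℂ) (blk A g g')‖
      ≤ 2 * (C * ‖Matrix.toEuclideanCLM (𝕜 := ℂ) (blk R g g')‖) := by
    have hcard : (Fintype.card Sgn : ℝ) = 2 := by
      rw [Fintype.card_coe, Finset.card_pair (by norm_num)]; norm_num
    rw [← hcard]
    refine norm_toEuclideanCLM_le_card_mul _ (by positivity) fun a a' => ?_
    exact (h (g, a) (g', a')).trans
      (mul_le_mul_of_nonneg_left (norm_entry_le_norm_toEuclideanCLM (blk R g g') a a') hC)
  simp only [opNorm0, ← enorm_eq_nnnorm, ← ofReal_norm]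
  calc ENNReal.ofReal ‖Matrix.toEuclideanCLM (𝕜 := ℂ) (blk A g g')‖
      ≤ ENNReal.ofReal (2 * (C * ‖Matrix.toEuclideanCLM (𝕜 := ℂ) (blk R g g')‖)) :=
        ENNReal.ofReal_le_ofReal hop
    _ = _ := by
        rw [ENNReal.ofReal_mul (by norm_num), ENNReal.ofReal_mul hC, ENNReal.ofReal_ofNat,
          mul_assoc]

variable [AddCommGroup G]

lemma blockSup_le_mul {c : ℝ≥0∞}
    (h : ∀ g g', opNorm0 (blk A g g') ≤ c * opNorm0 (blk R g g')) (i : G) :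
    blockSup A i ≤ c * blockSup R i :=
  iSup_le fun g => (h g (g - i)).trans
    (mul_le_mul_right (le_iSup (fun g => opNorm0 (blk R g (g - i))) g) c)

lemma dnorm_le_mul_of_blockSup_le (sz : G → ℕ) (s : ℝ) {c : ℝ≥0∞}
    (h : ∀ i, blockSup A i ≤ c * blockSup R i) :
    dnorm sz s A ≤ c * dnorm sz s R := by
  have hsum : ∑' i, (ang sz i : ℝ≥0∞) ^ (2 * s) * blockSup A i ^ 2
      ≤ c ^ 2 * ∑' i, (ang sz i : ℝ≥0∞) ^ (2 * s) * blockSup R i ^ 2 := by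
    rw [← ENNReal.tsum_mul_left]
    refine ENNReal.tsum_le_tsum fun i => ?_
    calc (ang sz i : ℝ≥0∞) ^ (2 * s) * blockSup A i ^ 2
        ≤ (ang sz i : ℝ≥0∞) ^ (2 * s) * (c * blockSup R i) ^ 2 := by gcongr; exact h i
      _ = c ^ 2 * ((ang sz i : ℝ≥0∞) ^ (2 * s) * blockSup R i ^ 2) := by ring
  calc dnorm sz s A
      ≤ (c ^ 2 * ∑' i, (ang sz i : ℝ≥0∞) ^ (2 * s) * blockSup R i ^ 2) ^ (1 / 2 : ℝ) :=
        ENNReal.rpow_le_rpow hsum (by norm_num)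
    _ = c * dnorm sz s R := by
        rw [dnorm, ENNReal.mul_rpow_of_nonneg _ _ (by norm_num), ← ENNReal.rpow_natCast c 2,
          ← ENNReal.rpow_mul]
        norm_num

lemma dnorm_le_of_norm_entry_le (sz : G → ℕ) (s : ℝ) {C : ℝ} (hC : 0 ≤ C)
    (h : ∀ k k', ‖A k k'‖ ≤ C * ‖R k k'‖) :
    dnorm sz s A ≤ 2 * ENNReal.ofReal C * dnorm sz s R :=
  dnorm_le_mul_of_blockSup_le sz s
    (blockSup_le_mul (opNorm0_blk_le_of_norm_entry_le hC h))

end DecayNorm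

lemma sup_natAbs_sub_le_kdist {d : ℕ} (k k' : KIdx d) :
    (Finset.univ.sup fun p => (k.1.1 p - k'.1.1 p).natAbs) ≤ kdist k k' := by
  unfold kdist
  split_ifs with hk
  · simp [hk.1]
  · exact le_max_left _ _

lemma kdist_self {d : ℕ} (k : KIdx d) : kdist k k = 0 := by
  simp [kdist]

lemma norm_div_le_of_separated {γ τ : ℝ} (hγ : 0 < γ) (hτ : 0 ≤ τ) {M N : ℕ}
    (hN : 1 ≤ N) (hM : M ≤ N) {r δ : ℂ} (hδ : γ * max 1 (M : ℝ) ^ (-τ) ≤ ‖δ‖) :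
    ‖r / δ‖ ≤ γ⁻¹ * (N : ℝ) ^ τ * ‖r‖ := by
  have hNpos : (0 : ℝ) < N := by exact_mod_cast hN
  have hδN : γ * (N : ℝ) ^ (-τ) ≤ ‖δ‖ := by
    refine le_trans (mul_le_mul_of_nonneg_left ?_ hγ.le) hδ
    refine Real.rpow_le_rpow_of_nonpos (by positivity) ?_ (neg_nonpos.mpr hτ)
    exact_mod_cast max_le hN hM
  calc ‖r / δ‖ = ‖r‖ / ‖δ‖ := norm_div r δ
    _ ≤ ‖r‖ / (γ * (N : ℝ) ^ (-τ)) := div_le_div_of_nonneg_left (norm_nonneg _) (by positivity) hδN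
    _ = γ⁻¹ * (N : ℝ) ^ τ * ‖r‖ := by
        rw [Real.rpow_neg hNpos.le]; field_simp

theorem homological_solution_decay_estimate_general (d : ℕ) (N : ℕ) (hN : 1 ≤ N)
    (γ τ : ℝ) (hγ : 0 < γ) (hτ : 0 < τ)
    (dk : KIdx d → ℂ) (R : KIdx d → KIdx d → ℂ)
    (hsep : ∀ k k' : KIdx d, k ≠ k' → kdist k k' ≤ N →
      γ * (max 1 ((Finset.univ.sup fun p => (k.1.1 p - k'.1.1 p).natAbs) : ℕ) : ℝ) ^ (-τ)
        ≤ ‖dk k - dk k'‖)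
    (A : KIdx d → KIdx d → ℂ)
    (hA : ∀ k k' : KIdx d,
      A k k' = if 0 < kdist k k' ∧ kdist k k' ≤ N then R k k' / (dk k - dk k') else 0) :
    ∀ s : ℝ, 0 ≤ s →
      dnorm (szI d) s A ≤ 2 * (ENNReal.ofReal γ)⁻¹ * (N : ℝ≥0∞) ^ (τ : ℝ) * dnorm (szI d) s R := by
  have hentry : ∀ k k', ‖A k k'‖ ≤ γ⁻¹ * (N : ℝ) ^ τ * ‖R k k'‖ := fun k k' => by
    rw [hA]
    split_ifs with hk
    · have hne : k ≠ k' := by rintro rfl; simp [kdist_self] at hk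
      exact norm_div_le_of_separated hγ hτ.le hN
        ((sup_natAbs_sub_le_kdist k k').trans hk.2) (hsep k k' hne hk.2)
    · simp only [norm_zero]; positivity
  intro s _
  have hconst : ENNReal.ofReal (γ⁻¹ * (N : ℝ) ^ τ) = (ENNReal.ofReal γ)⁻¹ * (N : ℝ≥0∞) ^ τ := by
    rw [ENNReal.ofReal_mul (by positivity), ENNReal.ofReal_inv_of_pos hγ,
      ← ENNReal.ofReal_rpow_of_nonneg (Nat.cast_nonneg N) hτ.le, ENNReal.ofReal_natCast]
  rw [mul_assoc 2, ← hconst]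
  exact dnorm_le_of_norm_entry_le (szI d) s (by positivity) hentry

/-- If the small divisors satisfy `|d_k − d_{k'}| ≥ γ ⟨l−l'⟩^{−τ}` for all `k ≠ k'` with
`dist(k,k') ≤ N`, then the solution `A` of the homological equation satisfies
`|A|_s ≤ 2 γ⁻¹ N^τ |R|_s` for every `s ≥ 0`. -/
theorem homological_solution_decay_estimate (d : ℕ) (hd : 1 ≤ d) (N : ℕ) (hN : 1 ≤ N)
    (γ τ : ℝ) (hγ : 0 < γ) (hτ : 0 < τ)
    (dk : KIdx d → ℂ) (R : KIdx d → KIdx d → ℂ)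
    (hsep : ∀ k k' : KIdx d, k ≠ k' → kdist k k' ≤ N →
      γ * (max 1 ((Finset.univ.sup fun p => (k.1.1 p - k'.1.1 p).natAbs) : ℕ) : ℝ) ^ (-τ)
        ≤ ‖dk k - dk k'‖)
    (A : KIdx d → KIdx d → ℂ)
    (hA : ∀ k k' : KIdx d,
      A k k' = if 0 < kdist k k' ∧ kdist k k' ≤ N then R k k' / (dk k - dk k') else 0) :
    ∀ s : ℝ, 0 ≤ s →
      dnorm (szI d) s A ≤ 2 * (ENNReal.ofReal γ)⁻¹ * (N : ℝ≥0∞) ^ (τ : ℝ) * dnorm (szI d) s R :=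
  homological_solution_decay_estimate_general d N hN γ τ hγ hτ dk R hsep A hA
end

section
/- Let ρ = 1/√8 and Λ₊ = {m/√8 : m ∈ ℕ}. Let j, j' ∈ Λ₊, let a, a' ∈ {−1, 1} with (j,a) ≠ (j',a'), and let L ≥ 1 be a real number. If |a(j+ρ)² − a'(j'+ρ)²| ≤ 6L, then j ≤ 17L and j' ≤ 17L. -/
/-!
If the signs agree, `(j+ρ)² − (j'+ρ)² = (j − j')(j + j' + 2ρ)`, and distinct points of the
lattice `ℕ/√8` are at distance at least `1/√8`, so `j + j' + 2ρ ≤ 6√8 L < 17 L`.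
If the signs differ, the quantity is `±((j+ρ)² + (j'+ρ)²)`, so both squares are at most `6L`,
and `x² ≤ c` with `1 ≤ c` forces `x ≤ c`.
-/

open Real

theorem sqrt_eight_lt : √8 < 17 / 6 := by
  rw [Real.sqrt_lt' (by norm_num)]
  norm_num

theorem inv_le_abs_natCast_div_sub_natCast_div {s : ℝ} (hs : 0 < s) {m m' : ℕ} (h : m ≠ m') :
    s⁻¹ ≤ |(m : ℝ) / s - m' / s| := by
  have hd : (1 : ℝ) ≤ |(m : ℝ) - m'| := by
    exact_mod_cast Int.one_le_abs (sub_ne_zero.mpr (Int.ofNat_inj.not.mpr h))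
  rw [← sub_div, abs_div, abs_of_pos hs, inv_eq_one_div]
  gcongr

theorem mul_add_le_of_le_abs_sub {u v δ C : ℝ} (hu : 0 ≤ u) (hv : 0 ≤ v) (hδ : δ ≤ |u - v|)
    (h : |u ^ 2 - v ^ 2| ≤ C) : δ * (u + v) ≤ C :=
  calc δ * (u + v) ≤ |u - v| * (u + v) := by gcongr
    _ = |u ^ 2 - v ^ 2| := by rw [sq_sub_sq, abs_mul, abs_of_nonneg (add_nonneg hu hv), mul_comm]
    _ ≤ C := h

theorem le_of_sq_le_of_one_le {x c : ℝ} (h : x ^ 2 ≤ c) (hc : 1 ≤ c) : x ≤ c := by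
  nlinarith

theorem resonant_same_sign {ρ L : ℝ} (hρ : 0 ≤ ρ) (hL : 0 ≤ L) {m m' : ℕ} (hm : m ≠ m')
    (h : |((m : ℝ) / √8 + ρ) ^ 2 - ((m' : ℝ) / √8 + ρ) ^ 2| ≤ 6 * L) :
    (m : ℝ) / √8 ≤ 17 * L ∧ (m' : ℝ) / √8 ≤ 17 * L := by
  have hs : 0 < √8 := by positivity
  have hspacing : (√8)⁻¹ ≤ |((m : ℝ) / √8 + ρ) - ((m' : ℝ) / √8 + ρ)| := by
    rw [add_sub_add_right_eq_sub]
    exact inv_le_abs_natCast_div_sub_natCast_div hs hm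
  have hsum := mul_add_le_of_le_abs_sub (by positivity) (by positivity) hspacing h
  rw [inv_mul_le_iff₀ hs] at hsum
  have h6 : √8 * (6 * L) ≤ 17 * L := by nlinarith [sqrt_eight_lt]
  have hm0 : 0 ≤ (m : ℝ) / √8 := by positivity
  have hm'0 : 0 ≤ (m' : ℝ) / √8 := by positivity
  constructor <;> linarith

theorem resonant_opposite_sign {x y ρ L : ℝ} (hρ : 0 ≤ ρ) (hL : 1 ≤ L)
    (h : (x + ρ) ^ 2 + (y + ρ) ^ 2 ≤ 6 * L) : x ≤ 17 * L ∧ y ≤ 17 * L := by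
  have hx' := le_of_sq_le_of_one_le (c := 6 * L) (x := x + ρ) (by linarith [sq_nonneg (y + ρ)]) (by linarith)
  have hy' := le_of_sq_le_of_one_le (c := 6 * L) (x := y + ρ) (by linarith [sq_nonneg (x + ρ)]) (by linarith)
  constructor <;> linarith

/-- Localization of resonant indices for `SU(2)`: with `ρ = 1/√8`, `j, j' ∈ Λ₊ = ℕ/√8`,
signs `a, a' ∈ {−1,1}` with `(j,a) ≠ (j',a')` and `L ≥ 1`, the inequality
`|a(j+ρ)² − a'(j'+ρ)²| ≤ 6L` forces `j ≤ 17L` and `j' ≤ 17L`. -/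
theorem resonant_index_localization (ρ : ℝ) (hρ : ρ = 1 / Real.sqrt 8)
    (j j' : ℝ) (hj : ∃ m : ℕ, j = (m : ℝ) / Real.sqrt 8)
    (hj' : ∃ m : ℕ, j' = (m : ℝ) / Real.sqrt 8)
    (a a' : ℤ) (ha : a = -1 ∨ a = 1) (ha' : a' = -1 ∨ a' = 1)
    (hne : (j, a) ≠ (j', a'))
    (L : ℝ) (hL : 1 ≤ L)
    (h : |(a : ℝ) * (j + ρ) ^ 2 - (a' : ℝ) * (j' + ρ) ^ 2| ≤ 6 * L) :
    j ≤ 17 * L ∧ j' ≤ 17 * L := by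
  obtain ⟨m, rfl⟩ := hj
  obtain ⟨m', rfl⟩ := hj'
  have hρ0 : 0 ≤ ρ := hρ ▸ by positivity
  have ha1 : |(a : ℝ)| = 1 := by rcases ha with rfl | rfl <;> norm_num
  rcases eq_or_ne a a' with rfl | hsign
  · have hm : m ≠ m' := fun e => hne (by rw [e])
    rw [← mul_sub, abs_mul, ha1, one_mul] at h
    exact resonant_same_sign hρ0 (by linarith) hm h
  · obtain rfl : a' = -a := by omega
    rw [Int.cast_neg, neg_mul, sub_neg_eq_add, ← mul_add, abs_mul, ha1, one_mul,
      abs_of_nonneg (by positivity)] at h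
    exact resonant_opposite_sign hρ0 hL h
end

section
/- Let 𝔄 be a complex unital Banach algebra and let D, R, S, E, A ∈ 𝔄 satisfy the homological equation S + (AD − DA) = E. Then exp(A) (D + R) exp(−A) = D + E + R₁, where R₁ := (R − S) + Σ_{m=2}^∞ (1/m!) ad_A^{m−1}(E − S) + Σ_{m=1}^∞ (1/m!) ad_A^m(R), with ad_A(X) = AX − XA and both series absolutely convergent. -/
/-!
Conjugation by `exp A` is the exponential of the derivation `ad_A`. On `𝔄 →L[𝕜] 𝔄`,
`ad_A = L_A + R_{-A}` is a sum of commuting left and right multiplications, so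
`exp (ad_A) = L_{exp A} ∘ R_{exp (-A)}`, i.e. `exp A * X * exp (-A) = ∑ (1/n!) ad_A^n X`.
For `X = D + R` the homological equation says `ad_A D = E - S`, so the terms `n = 0, 1` of the
`D`-series give `D + E - S`, the term `n = 0` of the `R`-series gives `R`, and the tails are the
two series of `R₁`; they converge absolutely because `‖ad_A^n X‖ ≤ (2‖A‖)^n ‖X‖`.
-/

open NormedSpace

/-- The adjoint action `ad_A(X) = AX − XA`. -/
def adAct {𝔄 : Type*} [Ring 𝔄] (A X : 𝔄) : 𝔄 := A * X - X * A

open scoped Nat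

section Norm

variable {𝔄 : Type*} [NormedRing 𝔄]

lemma norm_adAct_le (A X : 𝔄) : ‖adAct A X‖ ≤ 2 * ‖A‖ * ‖X‖ :=
  calc ‖A * X - X * A‖ ≤ ‖A * X‖ + ‖X * A‖ := norm_sub_le _ _
    _ ≤ ‖A‖ * ‖X‖ + ‖X‖ * ‖A‖ := add_le_add (norm_mul_le _ _) (norm_mul_le _ _)
    _ = 2 * ‖A‖ * ‖X‖ := by ring

lemma norm_iterate_adAct_le (A X : 𝔄) (n : ℕ) :
    ‖(adAct A)^[n] X‖ ≤ (2 * ‖A‖) ^ n * ‖X‖ := by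
  induction n with
  | zero => simp
  | succ n ih =>
    rw [Function.iterate_succ_apply', pow_succ', mul_assoc]
    exact (norm_adAct_le A _).trans (by gcongr)

lemma summable_inv_factorial_mul_norm_iterate_adAct (A X : 𝔄) (j k : ℕ) :
    Summable fun m : ℕ => (((m + k) ! : ℝ))⁻¹ * ‖(adAct A)^[m + j] X‖ := by
  refine .of_nonneg_of_le (fun m => by positivity) (fun m => ?_)
    ((Real.summable_pow_div_factorial (2 * ‖A‖)).mul_right ((2 * ‖A‖) ^ j * ‖X‖))
  calc (((m + k) ! : ℝ))⁻¹ * ‖(adAct A)^[m + j] X‖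
      ≤ ((m ! : ℝ))⁻¹ * ((2 * ‖A‖) ^ (m + j) * ‖X‖) := by
        gcongr
        · exact Nat.le_add_right m k
        · exact norm_iterate_adAct_le A X _
    _ = (2 * ‖A‖) ^ m / m ! * ((2 * ‖A‖) ^ j * ‖X‖) := by ring

end Norm

section Exp

variable (𝕜 : Type*) {𝔄 : Type*} [RCLike 𝕜] [NormedRing 𝔄] [NormedAlgebra 𝕜 𝔄]

noncomputable def mulLeftRingHom : 𝔄 →+* (𝔄 →L[𝕜] 𝔄) where
  toFun := ContinuousLinearMap.mul 𝕜 𝔄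
  map_one' := by ext; simp
  map_mul' a b := by ext; simp [mul_assoc]
  map_zero' := by ext; simp
  map_add' a b := by ext; simp

noncomputable def mulRightRingHom : 𝔄ᵐᵒᵖ →+* (𝔄 →L[𝕜] 𝔄) where
  toFun a := (ContinuousLinearMap.mul 𝕜 𝔄).flip a.unop
  map_one' := by ext; simp
  map_mul' a b := by ext; simp [mul_assoc]
  map_zero' := by ext; simp
  map_add' a b := by ext; simp

noncomputable def adCLM (A : 𝔄) : 𝔄 →L[𝕜] 𝔄 :=
  ContinuousLinearMap.mul 𝕜 𝔄 A - (ContinuousLinearMap.mul 𝕜 𝔄).flip A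

lemma adCLM_pow_apply (A X : 𝔄) (n : ℕ) : (adCLM 𝕜 A ^ n) X = (adAct A)^[n] X := by
  induction n generalizing X with
  | zero => rfl
  | succ n ih => rw [pow_succ]; exact ih (adCLM 𝕜 A X)

variable [CompleteSpace 𝔄]

lemma exp_adCLM_apply (A X : 𝔄) : exp (adCLM 𝕜 A) X = exp A * X * exp (-A) := by
  let +nondep : NormedAlgebra ℚ 𝔄 := .restrictScalars ℚ 𝕜 𝔄
  let +nondep : NormedAlgebra ℚ (𝔄 →L[𝕜] 𝔄) := .restrictScalars ℚ 𝕜 (𝔄 →L[𝕜] 𝔄)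
  have hleft : exp (mulLeftRingHom 𝕜 A) = mulLeftRingHom 𝕜 (exp A) :=
    (map_exp (mulLeftRingHom 𝕜) (ContinuousLinearMap.mul 𝕜 𝔄).continuous A).symm
  have hright : exp (mulRightRingHom 𝕜 (.op (-A))) = mulRightRingHom 𝕜 (.op (exp (-A))) := by
    rw [← exp_op, map_exp (mulRightRingHom 𝕜)
      ((ContinuousLinearMap.mul 𝕜 𝔄).flip.continuous.comp MulOpposite.continuous_unop)]
  have hsplit : adCLM 𝕜 A = mulLeftRingHom 𝕜 A + mulRightRingHom 𝕜 (.op (-A)) := by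
    ext; simp [adCLM, mulLeftRingHom, mulRightRingHom, sub_eq_add_neg]
  have hcomm : Commute (mulLeftRingHom 𝕜 A) (mulRightRingHom 𝕜 (.op (-A))) := by
    ext; simp [mulLeftRingHom, mulRightRingHom, mul_assoc]
  rw [hsplit, exp_add_of_commute hcomm, hleft, hright]
  simp [mulLeftRingHom, mulRightRingHom, mul_assoc]

lemma hasSum_exp_mul_mul_exp_neg (A X : 𝔄) :
    HasSum (fun n : ℕ => ((n ! : 𝕜))⁻¹ • (adAct A)^[n] X) (exp A * X * exp (-A)) := by
  rw [← exp_adCLM_apply 𝕜]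
  simpa only [ContinuousLinearMap.apply_apply, smul_apply, adCLM_pow_apply] using
    (ContinuousLinearMap.apply 𝕜 𝔄 X).hasSum (exp_series_hasSum_exp' (𝕂 := 𝕜) (adCLM 𝕜 A))

end Exp

/-- The KAM conjugation identity: if `S + (AD − DA) = E` in a complex unital Banach
algebra, then `exp(A)(D + R)exp(−A) = D + E + R₁` with
`R₁ = (R − S) + Σ_{m≥2} (1/m!) ad_A^{m−1}(E − S) + Σ_{m≥1} (1/m!) ad_A^m(R)`,
both series being absolutely convergent. -/
theorem kam_step_conjugation (𝔄 : Type*) [NormedRing 𝔄] [NormedAlgebra ℂ 𝔄]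
    [CompleteSpace 𝔄] (D R S E A : 𝔄)
    (hhom : S + (A * D - D * A) = E) :
    Summable (fun m : ℕ => (((m + 2).factorial : ℝ))⁻¹ * ‖(adAct A)^[m + 1] (E - S)‖) ∧
    Summable (fun m : ℕ => (((m + 1).factorial : ℝ))⁻¹ * ‖(adAct A)^[m + 1] R‖) ∧
    exp A * (D + R) * exp (-A) =
      D + E + ((R - S)
        + ∑' m : ℕ, (((m + 2).factorial : ℂ))⁻¹ • (adAct A)^[m + 1] (E - S)
        + ∑' m : ℕ, (((m + 1).factorial : ℂ))⁻¹ • (adAct A)^[m + 1] R) := by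
  refine ⟨summable_inv_factorial_mul_norm_iterate_adAct A (E - S) 1 2,
    summable_inv_factorial_mul_norm_iterate_adAct A R 1 1, ?_⟩
  have hAD : adAct A D = E - S := by rw [← hhom, adAct]; abel
  have hiter (n : ℕ) : (adAct A)^[n + 2] D = (adAct A)^[n + 1] (E - S) := by
    rw [Function.iterate_succ_apply, hAD]
  have hD := (hasSum_nat_add_iff' 2).mpr (hasSum_exp_mul_mul_exp_neg ℂ A D)
  have hR := (hasSum_nat_add_iff' 1).mpr (hasSum_exp_mul_mul_exp_neg ℂ A R)
  simp only [hiter] at hD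
  simp only [Finset.sum_range_succ, Finset.range_one, Finset.sum_singleton, Nat.factorial_zero,
    Nat.factorial_one, Nat.cast_one, inv_one, one_smul, Function.iterate_zero, id_eq,
    Function.iterate_one, hAD] at hD hR
  rw [hD.tsum_eq, hR.tsum_eq, mul_add, add_mul]
  abel
end

section
/- Let d ≥ 1 and fix s₀ > (d+1)/2. There exists a constant C(s₀), depending only on d and s₀, with the following property. Let T : K × K → ℂ (K = ℤ^d × ℤ × {−1,1}) be Töplitz in time, i.e. there exists T̂ such that T_{(l,j,a),(l',j',a')} = T̂(l−l')_{(j,a),(j',a')} for all indices. Suppose s ≥ 0 and |T|_{s+s₀} < ∞. Then for every φ ∈ ℝ^d the sums T(φ)_{(j,a),(j',a')} := Σ_{l∈ℤ^d} T̂(l)_{(j,a),(j',a')} e^{i l·φ} converge absolutely and define a matrix T(φ) on (ℤ × {−1,1}) × (ℤ × {−1,1}) satisfying sup_{φ∈ℝ^d} |T(φ)|_s ≤ C(s₀) |T|_{s+s₀}, where on the left |·|_s is the s-decay norm for matrices indexed by ℤ × {−1,1} and on the right |·|_{s+s₀} is the s-decay norm for matrices indexed by K. -/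
open scoped Classical ENNReal NNReal

/-- The phase-space index set `ℤ × {−1,1}`. -/
abbrev PIdx : Type := ℤ × Sgn

noncomputable section

/-- `|j|` on `ℤ`, size function for the phase-space indices. -/
def szZ (j : ℤ) : ℕ := j.natAbs

end

/-!
Each block of `T(φ)` at offset `j` is a combination with unimodular coefficients of the blocks
of `T̂(l)` at offset `j`, and by Töplitz invariance these are blocks of `T` at offset `(l, j)`;
hence `[T(φ)(j)] ≤ Σ_l [T(l, j)]`. Writing `1 = ⟨(l,j)⟩^{s₀} ⟨(l,j)⟩^{-s₀}` and using
`⟨(l,j)⟩^{-s₀} ≤ ⟨l⟩^{-s₀}`, Cauchy–Schwarz in `l` gives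
`⟨j⟩^{2s} [T(φ)(j)]² ≤ K Σ_l ⟨(l,j)⟩^{2(s+s₀)} [T(l,j)]²` with `K = Σ_{l ∈ ℤ^d} ⟨l⟩^{-2s₀}`,
which is finite because `2s₀ > d`. Summing over `j` gives `|T(φ)|_s ≤ K^{1/2} |T|_{s+s₀}`.
-/

open Finset MeasureTheory Module

theorem ENNReal.sq_tsum_mul_le {ι : Type*} (f g : ι → ℝ≥0∞) :
    (∑' i, f i * g i) ^ 2 ≤ (∑' i, f i ^ 2) * ∑' i, g i ^ 2 := by
  let _ : MeasurableSpace ι := ⊤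
  have holder := ENNReal.lintegral_mul_le_Lp_mul_Lq (Measure.count (α := ι))
    Real.HolderConjugate.two_two (measurable_from_top (f := f)).aemeasurable
    (measurable_from_top (f := g)).aemeasurable
  simp only [lintegral_count, Pi.mul_apply, ENNReal.rpow_two] at holder
  calc (∑' i, f i * g i) ^ 2
      ≤ ((∑' i, f i ^ 2) ^ (1 / 2 : ℝ) * (∑' i, g i ^ 2) ^ (1 / 2 : ℝ)) ^ 2 := by gcongr
    _ = (∑' i, f i ^ 2) * ∑' i, g i ^ 2 := by
      rw [mul_pow, ← ENNReal.rpow_two, ← ENNReal.rpow_two, ← ENNReal.rpow_mul,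
        ← ENNReal.rpow_mul]
      norm_num

theorem ENNReal.rpow_sq (x : ℝ≥0∞) (r : ℝ) : (x ^ r) ^ 2 = x ^ (2 * r) := by
  rw [← ENNReal.rpow_two, ← ENNReal.rpow_mul, mul_comm]

theorem enorm_exp_I_mul_sum {ι : Type*} [Fintype ι] (l : ι → ℤ) (φ : ι → ℝ) :
    ‖Complex.exp (Complex.I * ∑ p, (l p : ℂ) * (φ p : ℂ))‖ₑ = 1 := by
  have h := Complex.norm_exp_I_mul_ofReal (∑ p, (l p : ℝ) * φ p)
  push_cast at h
  rw [← ofReal_norm, h, ENNReal.ofReal_one]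

theorem Matrix.nnnorm_entry_le_nnnorm_toEuclideanCLM {n 𝕜 : Type*} [Fintype n] [DecidableEq n]
    [RCLike 𝕜] (A : Matrix n n 𝕜) (i j : n) :
    ‖A i j‖₊ ≤ ‖Matrix.toEuclideanCLM (𝕜 := 𝕜) A‖₊ :=
  calc ‖A i j‖₊ = ‖Matrix.toEuclideanCLM (𝕜 := 𝕜) A (EuclideanSpace.single j 1) i‖₊ := by
        simp [Matrix.ofLp_toEuclideanCLM, Matrix.mulVec_single]
    _ ≤ ‖Matrix.toEuclideanCLM (𝕜 := 𝕜) A (EuclideanSpace.single j 1)‖₊ :=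
        PiLp.nnnorm_apply_le _ _
    _ ≤ ‖Matrix.toEuclideanCLM (𝕜 := 𝕜) A‖₊ := by
        simpa using (Matrix.toEuclideanCLM (𝕜 := 𝕜) A).le_opNNNorm (EuclideanSpace.single j 1)

/-- `|l|_∞` on `ℤ^d`, so that `szI d (l, j) = max (szL d l) (szZ j)`. -/
def szL (d : ℕ) (l : Fin d → ℤ) : ℕ := univ.sup fun p => (l p).natAbs

/-- Summability over `ℤ^d` is read off the lattice `ℤ^d ⊆ ℝ^d`, where `‖l‖ = szL d l`. -/
theorem summable_ang_szL_rpow_neg {d : ℕ} {t : ℝ} (ht : (d : ℝ) < t) :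
    Summable fun l : Fin d → ℤ => (ang (szL d) l : ℝ) ^ (-t) := by
  let L := Submodule.span ℤ (Set.range (Pi.basisFun ℝ (Fin d)))
  have hrank : finrank ℤ L = d := by rw [ZLattice.rank ℝ L, Module.finrank_fin_fun]
  let e : (Fin d → ℤ) → L := fun l => ⟨fun p => l p, by
    rw [Basis.mem_span_iff_repr_mem (R := ℤ) (Pi.basisFun ℝ (Fin d))]
    intro p
    simp⟩
  have he : Function.Injective e := fun l l' h => by
    funext p
    simpa [e] using congrFun (congrArg Subtype.val h) p
  have hnorm : ∀ l, ‖e l‖ ≤ szL d l := fun l => by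
    show ‖fun p => (l p : ℝ)‖ ≤ _
    refine (pi_norm_le_iff_of_nonneg (Nat.cast_nonneg _)).2 fun p => ?_
    rw [Real.norm_eq_abs, ← Int.cast_abs, Int.abs_eq_natAbs, Int.cast_natCast]
    exact_mod_cast le_sup (f := fun p => (l p).natAbs) (mem_univ p)
  refine ((ZLattice.summable_norm_rpow L (-t) (by rw [hrank]; linarith)).comp_injective he)
    |>.of_norm_bounded_eventually ?_
  filter_upwards [(Set.finite_singleton (0 : Fin d → ℤ)).compl_mem_cofinite] with l hl
  have hpos : 0 < ‖e l‖ := norm_pos_iff.2 fun h => hl (he (h.trans (by ext; simp [e])))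
  rw [Real.norm_of_nonneg (by positivity)]
  exact Real.rpow_le_rpow_of_nonpos hpos ((hnorm l).trans (by exact_mod_cast le_max_right _ _))
    (by linarith [show (0 : ℝ) ≤ d from d.cast_nonneg])

theorem tsum_ang_szL_rpow_neg_ne_top {d : ℕ} {t : ℝ} (ht : (d : ℝ) < t) :
    ∑' l : Fin d → ℤ, (ang (szL d) l : ℝ≥0∞) ^ (-t) ≠ ⊤ := by
  have hpos : ∀ l, 0 < (ang (szL d) l : ℝ) := fun l => by simp [ang]
  have hofReal : ∀ l, (ang (szL d) l : ℝ≥0∞) ^ (-t) = ENNReal.ofReal ((ang (szL d) l : ℝ) ^ (-t)) :=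
    fun l => by rw [← ENNReal.ofReal_natCast, ENNReal.ofReal_rpow_of_pos (hpos l)]
  simp_rw [hofReal, ← ENNReal.ofReal_tsum_of_nonneg (fun l => (Real.rpow_pos_of_pos (hpos l) _).le)
    (summable_ang_szL_rpow_neg ht)]
  exact ENNReal.ofReal_ne_top

theorem enorm_entry_le_opNorm0 (m : Matrix Sgn Sgn ℂ) (a a' : Sgn) : ‖m a a'‖ₑ ≤ opNorm0 m := by
  simpa [opNorm0, enorm] using Matrix.nnnorm_entry_le_nnnorm_toEuclideanCLM m a a'

theorem opNorm0_smul (c : ℂ) (m : Matrix Sgn Sgn ℂ) : opNorm0 (c • m) = ‖c‖ₑ * opNorm0 m := by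
  simp [opNorm0, nnnorm_smul, enorm]

/-- `opNorm0` is the enorm of the `ℓ²`-operator norm on matrices, whose topology is the product
topology, so the triangle inequality holds for arbitrary series. -/
theorem opNorm0_tsum_le {ι : Type*} (m : ι → Matrix Sgn Sgn ℂ) :
    opNorm0 (∑' i, m i) ≤ ∑' i, opNorm0 (m i) :=
  letI := Matrix.instL2OpNormedAddCommGroup (m := Sgn) (n := Sgn) (𝕜 := ℂ)
  enorm_tsum_le_tsum_enorm (f := m)

section blockSup

variable {G : Type*} [AddCommGroup G]

theorem opNorm0_blk_le_blockSup (M : G × Sgn → G × Sgn → ℂ) (h i : G) :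
    opNorm0 (blk M h (h - i)) ≤ blockSup M i :=
  le_iSup (fun h => opNorm0 (blk M h (h - i))) h

theorem enorm_le_blockSup (M : G × Sgn → G × Sgn → ℂ) (x y : G × Sgn) :
    ‖M x y‖ₑ ≤ blockSup M (x.1 - y.1) := by
  have := opNorm0_blk_le_blockSup M x.1 (x.1 - y.1)
  rw [sub_sub_cancel] at this
  exact (enorm_entry_le_opNorm0 (blk M x.1 y.1) x.2 y.2).trans this

theorem summable_mul_of_tsum_blockSup_ne_top {ι : Type*} {A : ι → G × Sgn → G × Sgn → ℂ}
    {c : ι → ℂ} (hc : ∀ i, ‖c i‖ₑ ≤ 1) {x y : G × Sgn}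
    (hA : ∑' i, blockSup (A i) (x.1 - y.1) ≠ ⊤) :
    Summable fun i => A i x y * c i := by
  refine Summable.of_enorm (ne_top_of_le_ne_top hA (ENNReal.tsum_le_tsum fun i => ?_))
  rw [enorm_mul]
  exact (mul_le_of_le_one_right' (hc i)).trans (enorm_le_blockSup (A i) x y)

theorem blockSup_tsum_mul_le {ι : Type*} (A : ι → G × Sgn → G × Sgn → ℂ) {c : ι → ℂ}
    (hc : ∀ i, ‖c i‖ₑ ≤ 1) (m : G) :
    blockSup (fun x y => ∑' i, A i x y * c i) m ≤ ∑' i, blockSup (A i) m := by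
  refine iSup_le fun h => ?_
  by_cases hA : ∑' i, blockSup (A i) m = ⊤
  · simp [hA]
  have hsum : ∀ a a' : Sgn, Summable fun i => A i (h, a) (h - m, a') * c i := fun a a' =>
    summable_mul_of_tsum_blockSup_ne_top hc (by rwa [sub_sub_cancel])
  have hblk : ∑' i, c i • blk (A i) h (h - m) = blk (fun x y => ∑' i, A i x y * c i) h (h - m) :=
    (Pi.hasSum.2 fun a => Pi.hasSum.2 fun a' => by
      simpa [blk, mul_comm] using (hsum a a').hasSum).tsum_eq
  rw [← hblk]
  refine (opNorm0_tsum_le _).trans (ENNReal.tsum_le_tsum fun i => ?_)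
  rw [opNorm0_smul]
  exact (mul_le_of_le_one_left' (hc i)).trans (opNorm0_blk_le_blockSup (A i) h m)

theorem blockSup_le_of_toeplitz {H : Type*} [AddCommGroup H]
    {T : (G × H) × Sgn → (G × H) × Sgn → ℂ} {Th : G → H × Sgn → H × Sgn → ℂ}
    (hT : ∀ (l l' : G) (j j' : H) (a a' : Sgn),
      T ((l, j), a) ((l', j'), a') = Th (l - l') (j, a) (j', a'))
    (l : G) (m : H) : blockSup (Th l) m ≤ blockSup T (l, m) := by
  refine iSup_le fun h => le_of_eq_of_le (congrArg opNorm0 ?_)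
    (opNorm0_blk_le_blockSup T (l, h) (l, m))
  ext a a'
  simp [blk, hT]

end blockSup

theorem dnorm_le_rpow_mul_dnorm {G G' : Type*} [AddCommGroup G] [AddCommGroup G']
    {sz : G → ℕ} {sz' : G' → ℕ} {s s' : ℝ} {M : G × Sgn → G × Sgn → ℂ}
    {M' : G' × Sgn → G' × Sgn → ℂ} {K : ℝ≥0∞}
    (h : ∑' i, (ang sz i : ℝ≥0∞) ^ (2 * s) * blockSup M i ^ 2 ≤
      K * ∑' i, (ang sz' i : ℝ≥0∞) ^ (2 * s') * blockSup M' i ^ 2) :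
    dnorm sz s M ≤ K ^ (1 / 2 : ℝ) * dnorm sz' s' M' := by
  rw [dnorm, dnorm, ← ENNReal.mul_rpow_of_nonneg _ _ (by norm_num)]
  exact ENNReal.rpow_le_rpow h (by norm_num)

section decay

variable {d : ℕ} {s s₀ : ℝ}

theorem ang_szZ_le_ang_szI (l : Fin d → ℤ) (j : ℤ) : ang szZ j ≤ ang (szI d) (l, j) :=
  max_le_max le_rfl (le_max_right _ _)

theorem ang_szL_le_ang_szI (l : Fin d → ℤ) (j : ℤ) : ang (szL d) l ≤ ang (szI d) (l, j) :=
  max_le_max le_rfl (le_max_left _ _)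

/-- Weighted Cauchy–Schwarz in `l`. -/
theorem sq_rpow_mul_tsum_le (hs : 0 ≤ s) (hs₀ : 0 ≤ s₀) (b : (Fin d → ℤ) × ℤ → ℝ≥0∞) (j : ℤ) :
    ((ang szZ j : ℝ≥0∞) ^ s * ∑' l, b (l, j)) ^ 2 ≤
      (∑' l, (ang (szL d) l : ℝ≥0∞) ^ (-(2 * s₀))) *
        ∑' l, (ang (szI d) (l, j) : ℝ≥0∞) ^ (2 * (s + s₀)) * b (l, j) ^ 2 := by
  have hweight : ∀ l, (ang szZ j : ℝ≥0∞) ^ s ≤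
      (ang (szI d) (l, j) : ℝ≥0∞) ^ (s + s₀) * (ang (szL d) l : ℝ≥0∞) ^ (-s₀) := fun l => by
    set w : ℝ≥0∞ := (ang (szI d) (l, j) : ℝ≥0∞)
    have hw : w ≠ 0 := by simp [w, ang]
    calc (ang szZ j : ℝ≥0∞) ^ s
        ≤ w ^ s := by gcongr; exact Nat.cast_le.2 (ang_szZ_le_ang_szI l j)
      _ = w ^ (s + s₀) * w ^ (-s₀) := by
        rw [← ENNReal.rpow_add _ _ hw (ENNReal.natCast_ne_top _), add_neg_cancel_right]
      _ ≤ w ^ (s + s₀) * (ang (szL d) l : ℝ≥0∞) ^ (-s₀) := by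
        rw [ENNReal.rpow_neg, ENNReal.rpow_neg]
        gcongr
        exact Nat.cast_le.2 (ang_szL_le_ang_szI l j)
  calc ((ang szZ j : ℝ≥0∞) ^ s * ∑' l, b (l, j)) ^ 2
      = (∑' l, (ang szZ j : ℝ≥0∞) ^ s * b (l, j)) ^ 2 := by rw [ENNReal.tsum_mul_left]
    _ ≤ (∑' l, ((ang (szI d) (l, j) : ℝ≥0∞) ^ (s + s₀) * b (l, j)) *
          (ang (szL d) l : ℝ≥0∞) ^ (-s₀)) ^ 2 := by
      refine pow_le_pow_left' (ENNReal.tsum_le_tsum fun l => ?_) 2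
      exact (mul_le_mul_left (hweight l) _).trans_eq (mul_right_comm _ _ _)
    _ ≤ _ := ENNReal.sq_tsum_mul_le _ _
    _ = _ := by simp_rw [mul_pow, ENNReal.rpow_sq, mul_neg, mul_comm]

theorem tsum_blockSup_ne_top (hs : 0 ≤ s) (hs₀ : 0 ≤ s₀) {T : KIdx d → KIdx d → ℂ}
    (hK : ∑' l, (ang (szL d) l : ℝ≥0∞) ^ (-(2 * s₀)) ≠ ⊤)
    (hT : dnorm (szI d) (s + s₀) T ≠ ⊤) (j : ℤ) :
    ∑' l, blockSup T (l, j) ≠ ⊤ := by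
  have hD : ∑' i, (ang (szI d) i : ℝ≥0∞) ^ (2 * (s + s₀)) * blockSup T i ^ 2 ≠ ⊤ := fun h =>
    hT (by rw [dnorm, h, ENNReal.top_rpow_of_pos (by norm_num)])
  have hsq := (sq_rpow_mul_tsum_le hs hs₀ (blockSup T) j).trans (mul_le_mul_right
    (ENNReal.tsum_comp_le_tsum_of_injective (f := fun l => (l, j))
      (fun l l' h => (Prod.ext_iff.1 h).1)
      fun i => (ang (szI d) i : ℝ≥0∞) ^ (2 * (s + s₀)) * blockSup T i ^ 2) _)
  have hone : 1 ≤ (ang szZ j : ℝ≥0∞) ^ s := by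
    have hang : (1 : ℝ≥0∞) ≤ ang szZ j := Nat.one_le_cast.2 (le_max_left _ _)
    simpa using ENNReal.rpow_le_rpow hang hs
  refine ne_top_of_le_ne_top ?_ (le_mul_of_one_le_left' hone)
  intro htop
  exact ENNReal.mul_ne_top hK hD (top_le_iff.1 (by simpa [htop] using hsq))

theorem dnorm_tsum_mul_le (hs : 0 ≤ s) (hs₀ : 0 ≤ s₀) {T : KIdx d → KIdx d → ℂ}
    {Th : (Fin d → ℤ) → PIdx → PIdx → ℂ}
    (hT : ∀ (l l' : Fin d → ℤ) (j j' : ℤ) (a a' : Sgn),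
      T ((l, j), a) ((l', j'), a') = Th (l - l') (j, a) (j', a'))
    {c : (Fin d → ℤ) → ℂ} (hc : ∀ l, ‖c l‖ₑ ≤ 1) :
    dnorm szZ s (fun x y => ∑' l, Th l x y * c l) ≤
      (∑' l, (ang (szL d) l : ℝ≥0∞) ^ (-(2 * s₀))) ^ (1 / 2 : ℝ) * dnorm (szI d) (s + s₀) T := by
  refine dnorm_le_rpow_mul_dnorm ?_
  rw [ENNReal.tsum_prod', ENNReal.tsum_comm, ← ENNReal.tsum_mul_left]
  refine ENNReal.tsum_le_tsum fun j => le_trans ?_ (sq_rpow_mul_tsum_le hs hs₀ (blockSup T) j)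
  rw [← ENNReal.rpow_sq, ← mul_pow]
  gcongr
  exact (blockSup_tsum_mul_le Th hc j).trans
    (ENNReal.tsum_le_tsum fun l => blockSup_le_of_toeplitz hT l j)

end decay

theorem toeplitz_phase_space_norm_general (d : ℕ) (s₀ : ℝ)
    (hs₀ : ((d : ℝ) + 1) / 2 < s₀) :
    ∃ C : ℝ≥0, ∀ (T : KIdx d → KIdx d → ℂ) (Th : (Fin d → ℤ) → PIdx → PIdx → ℂ),
      (∀ (l l' : Fin d → ℤ) (j j' : ℤ) (a a' : Sgn),
        T ((l, j), a) ((l', j'), a') = Th (l - l') (j, a) (j', a')) →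
      ∀ s : ℝ, 0 ≤ s → dnorm (szI d) (s + s₀) T ≠ ⊤ →
        (∀ (φ : Fin d → ℝ) (x y : PIdx),
          Summable fun l : Fin d → ℤ =>
            Th l x y * Complex.exp (Complex.I * ∑ p, (l p : ℂ) * (φ p : ℂ))) ∧
        ∀ φ : Fin d → ℝ,
          dnorm szZ s (fun x y => ∑' l : Fin d → ℤ,
              Th l x y * Complex.exp (Complex.I * ∑ p, (l p : ℂ) * (φ p : ℂ))) ≤
            (C : ℝ≥0∞) * dnorm (szI d) (s + s₀) T := by
  have hs₀' : 0 ≤ s₀ := by linarith [show (0 : ℝ) ≤ d from d.cast_nonneg]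
  set K := ∑' l : Fin d → ℤ, (ang (szL d) l : ℝ≥0∞) ^ (-(2 * s₀))
  have hK : K ≠ ⊤ := tsum_ang_szL_rpow_neg_ne_top (by linarith)
  refine ⟨(K ^ (1 / 2 : ℝ)).toNNReal, fun T Th hT s hs hfin => ⟨fun φ x y => ?_, fun φ => ?_⟩⟩
  · exact summable_mul_of_tsum_blockSup_ne_top (fun l => (enorm_exp_I_mul_sum l φ).le)
      (ne_top_of_le_ne_top (tsum_blockSup_ne_top hs hs₀' hK hfin _)
        (ENNReal.tsum_le_tsum fun l => blockSup_le_of_toeplitz hT l _))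
  · rw [ENNReal.coe_toNNReal (ENNReal.rpow_ne_top_of_nonneg (by norm_num) hK)]
    exact dnorm_tsum_mul_le hs hs₀' hT fun l => (enorm_exp_I_mul_sum l φ).le

/-- For a Töplitz-in-time matrix `T` on `K = ℤ^d × ℤ × {−1,1}` with `|T|_{s+s₀} < ∞`,
the time-Fourier sums `T(φ) = Σ_l T̂(l) e^{i l·φ}` converge absolutely and define
phase-space matrices satisfying `sup_φ |T(φ)|_s ≤ C(s₀) |T|_{s+s₀}`, where `C(s₀)`
depends only on `d` and `s₀`. -/
theorem toeplitz_phase_space_norm (d : ℕ) (hd : 1 ≤ d) (s₀ : ℝ)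
    (hs₀ : ((d : ℝ) + 1) / 2 < s₀) :
    ∃ C : ℝ≥0, ∀ (T : KIdx d → KIdx d → ℂ) (Th : (Fin d → ℤ) → PIdx → PIdx → ℂ),
      (∀ (l l' : Fin d → ℤ) (j j' : ℤ) (a a' : Sgn),
        T ((l, j), a) ((l', j'), a') = Th (l - l') (j, a) (j', a')) →
      ∀ s : ℝ, 0 ≤ s → dnorm (szI d) (s + s₀) T ≠ ⊤ →
        (∀ (φ : Fin d → ℝ) (x y : PIdx),
          Summable fun l : Fin d → ℤ =>
            Th l x y * Complex.exp (Complex.I * ∑ p, (l p : ℂ) * (φ p : ℂ))) ∧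
        ∀ φ : Fin d → ℝ,
          dnorm szZ s (fun x y => ∑' l : Fin d → ℤ,
              Th l x y * Complex.exp (Complex.I * ∑ p, (l p : ℂ) * (φ p : ℂ))) ≤
            (C : ℝ≥0∞) * dnorm (szI d) (s + s₀) T :=
  toeplitz_phase_space_norm_general d s₀ hs₀
end
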